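/- Let Q̄ be an imprecise probability tree, let E be a global upper expectation satisfying axioms P1–P5 together with P3= and P6, and let E' be any global upper expectation satisfying P1–P5. Then E(f|s) ≥ E'(f|s) for every f ∈ V̄_{b,lim} and every situation s ∈ 𝒳*. -/

import Mathlib

open Filter MeasureTheory
open scoped Classical ENNReal NNReal

namespace UEP

variable {X : Type*}

/-- The string of the first `n` states of a path `ω`. -/
def pref (ω : ℕ → X) (n : ℕ) : List X := List.ofFn (fun i : Fin n => ω i)

/-- The cylinder event of a situation `s`. -/
def cyl (s : List X) : Set (ℕ → X) := {ω : ℕ → X | pref ω s.length = s}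

/-- `f` depends only on the first `n` states. -/
def NMeas (n : ℕ) (f : (ℕ → X) → EReal) : Prop :=
  ∀ ω₁ ω₂ : ℕ → X, pref ω₁ n = pref ω₂ n → f ω₁ = f ω₂

/-- `f` is bounded below (by a real constant). -/
def IsBddBelow (f : (ℕ → X) → EReal) : Prop := ∃ c : ℝ, ∀ ω, (c : EReal) ≤ f ω

/-- `f` is bounded above (by a real constant). -/
def IsBddAbove (f : (ℕ → X) → EReal) : Prop := ∃ c : ℝ, ∀ ω, f ω ≤ (c : EReal)

/-- `f` is real-valued and bounded. -/
def IsGambleVal (f : (ℕ → X) → EReal) : Prop :=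
  ∃ a b : ℝ, ∀ ω, (a : EReal) ≤ f ω ∧ f ω ≤ (b : EReal)

/-- `f` is an `n`-measurable gamble. -/
def IsNGamble (n : ℕ) (f : (ℕ → X) → EReal) : Prop := NMeas n f ∧ IsGambleVal f

/-- `f` is a finitary gamble. -/
def IsFinitaryGamble (f : (ℕ → X) → EReal) : Prop := (∃ n, NMeas n f) ∧ IsGambleVal f

/-- `f` is finitary. -/
def IsFinitary (f : (ℕ → X) → EReal) : Prop := ∃ n, NMeas n f

/-- pointwise convergence of a sequence of global variables. -/
def PtwLim (fs : ℕ → (ℕ → X) → EReal) (f : (ℕ → X) → EReal) : Prop :=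
  ∀ ω, Tendsto (fun n => fs n ω) atTop (nhds (f ω))

/-- the sequence is uniformly bounded below. -/
def UnifBddBelow (fs : ℕ → (ℕ → X) → EReal) : Prop :=
  ∃ c : ℝ, ∀ n ω, (c : EReal) ≤ fs n ω

/-- `f` belongs to `V̄_{b,lim}`: bounded below and a pointwise limit of finitary gambles. -/
def Vblim (f : (ℕ → X) → EReal) : Prop :=
  IsBddBelow f ∧ ∃ fs : ℕ → (ℕ → X) → EReal,
    (∀ n, IsFinitaryGamble (fs n)) ∧ PtwLim fs f

/-- A coherent upper expectation on the finite state space `X`. -/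
def IsCoherent [Fintype X] (Q : (X → ℝ) → ℝ) : Prop :=
  (∀ f : X → ℝ, Q f ≤ ⨆ x, f x) ∧
  (∀ f g : X → ℝ, Q (fun x => f x + g x) ≤ Q f + Q g) ∧
  (∀ l : ℝ, 0 ≤ l → ∀ f : X → ℝ, Q (fun x => l * f x) = l * Q f)

/-- Axiom P1: compatibility with the local models. -/
def P1 (Q : List X → (X → ℝ) → ℝ) (E : ((ℕ → X) → EReal) → List X → EReal) : Prop :=
  ∀ (s : List X) (f : X → ℝ),
    E (fun ω => (f (ω s.length) : EReal)) s = ((Q s f : ℝ) : EReal)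

/-- Axiom P2. -/
def P2 (E : ((ℕ → X) → EReal) → List X → EReal) : Prop :=
  ∀ f : (ℕ → X) → EReal, IsFinitaryGamble f → ∀ s : List X,
    E f s = E (fun ω => if ω ∈ cyl s then f ω else 0) s

/-- Axiom P3 (inequality form). -/
def P3le (E : ((ℕ → X) → EReal) → List X → EReal) : Prop :=
  ∀ f : (ℕ → X) → EReal, IsFinitaryGamble f → ∀ (n : ℕ) (ω : ℕ → X),
    E f (pref ω n) ≤ E (fun ω' => E f (pref ω' (n + 1))) (pref ω n)

/-- Axiom P3 with equality: the law of iterated upper expectations. -/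
def P3eq (E : ((ℕ → X) → EReal) → List X → EReal) : Prop :=
  ∀ f : (ℕ → X) → EReal, IsFinitaryGamble f → ∀ (n : ℕ) (ω : ℕ → X),
    E f (pref ω n) = E (fun ω' => E f (pref ω' (n + 1))) (pref ω n)

/-- Axiom P4: monotonicity. -/
def P4 (E : ((ℕ → X) → EReal) → List X → EReal) : Prop :=
  ∀ f g : (ℕ → X) → EReal, (∀ ω, f ω ≤ g ω) → ∀ s : List X, E f s ≤ E g s

/-- Axiom P5. -/
def P5 (E : ((ℕ → X) → EReal) → List X → EReal) : Prop :=
  ∀ (s : List X) (f : (ℕ → X) → EReal) (fs : ℕ → (ℕ → X) → EReal),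
    (∀ n, IsFinitaryGamble (fs n)) → UnifBddBelow fs → PtwLim fs f →
    E f s ≤ limsup (fun n => E (fs n) s) atTop

/-- Axiom P6. -/
def P6 (E : ((ℕ → X) → EReal) → List X → EReal) : Prop :=
  ∀ f : (ℕ → X) → EReal, Vblim f → ∀ s : List X,
    ∃ fs : ℕ → (ℕ → X) → EReal,
      (∀ n, IsNGamble n (fs n)) ∧ UnifBddBelow fs ∧ PtwLim fs f ∧
      limsup (fun n => E (fs n) s) atTop ≤ E f s

/-- Axiom P7. -/
def P7 (E : ((ℕ → X) → EReal) → List X → EReal) : Prop :=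
  ∀ (f : (ℕ → X) → EReal) (s : List X),
    E f s = sInf {y : EReal | ∃ g : (ℕ → X) → EReal,
      Vblim g ∧ (∀ ω, f ω ≤ g ω) ∧ y = E g s}

/-- bundled axioms P1–P5. -/
def P15 (Q : List X → (X → ℝ) → ℝ) (E : ((ℕ → X) → EReal) → List X → EReal) : Prop :=
  P1 Q E ∧ P2 E ∧ P3le E ∧ P4 E ∧ P5 E

/-- `Qe` extends `Q` from gambles to extended-real variables. -/
def ExtendsLocal [Fintype X] (Q : (X → ℝ) → ℝ) (Qe : (X → EReal) → EReal) : Prop :=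
  ∀ f : X → ℝ, Qe (fun x => (f x : EReal)) = ((Q f : ℝ) : EReal)

/-- continuity with respect to upper cuts. -/
def UpperCutCont (Qe : (X → EReal) → EReal) : Prop :=
  ∀ f : X → EReal, (∃ c : ℝ, ∀ x, (c : EReal) ≤ f x) →
    Tendsto (fun c : ℝ => Qe (fun x => min (f x) (c : EReal))) atTop (nhds (Qe f))

/-- continuity with respect to lower cuts. -/
def LowerCutCont (Qe : (X → EReal) → EReal) : Prop :=
  ∀ f : X → EReal,
    Tendsto (fun c : ℝ => Qe (fun x => max (f x) (c : EReal))) atBot (nhds (Qe f))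

/-- `Qe` is the extension of the imprecise probability tree `Q` satisfying
continuity with respect to upper and lower cuts. -/
def LocalExtension [Fintype X] (Q : List X → (X → ℝ) → ℝ)
    (Qe : List X → (X → EReal) → EReal) : Prop :=
  ∀ s : List X, ExtendsLocal (Q s) (Qe s) ∧ UpperCutCont (Qe s) ∧ LowerCutCont (Qe s)

/-- supermartingale with respect to the extended local models `Qe`. -/
def IsSupermart (Qe : List X → (X → EReal) → EReal) (M : List X → EReal) : Prop :=
  ∀ s : List X, Qe s (fun x => M (s ++ [x])) ≤ M s

/-- a bounded-below process. -/
def MBddBelow (M : List X → EReal) : Prop := ∃ c : ℝ, ∀ s : List X, (c : EReal) ≤ M s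

/-- the game-theoretic upper expectation (Shafer–Vovk). -/
noncomputable def EV (Qe : List X → (X → EReal) → EReal)
    (f : (ℕ → X) → EReal) (s : List X) : EReal :=
  sInf {y : EReal | ∃ M : List X → EReal, MBddBelow M ∧ IsSupermart Qe M ∧
    (∀ ω ∈ cyl s, f ω ≤ liminf (fun n => M (pref ω n)) atTop) ∧ y = M s}

/-- a canonical path passing through the situation `s`. -/
noncomputable def extPath [Nonempty X] (s : List X) : ℕ → X :=
  fun i => if h : i < s.length then s.get ⟨i, h⟩ else Classical.arbitrary X

/-- extended-real addition with the convention `(+∞) + (−∞) = (−∞) + (+∞) = +∞`. -/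
noncomputable def eadd (a b : EReal) : EReal := if a = ⊤ ∨ b = ⊤ then ⊤ else a + b

/-- extended-real finite sums with the conventions `0·(±∞) = 0` and
`(+∞) + (−∞) = +∞`. -/
noncomputable def esum {α : Type*} (s : Finset α) (f : α → EReal) : EReal :=
  if ∃ x ∈ s, f x = ⊤ then ⊤ else ∑ x ∈ s, f x

/-- the σ-algebra `ℱ` on paths generated by all cylinder events. -/
def cylSA (X : Type*) : MeasurableSpace (ℕ → X) :=
  MeasurableSpace.generateFrom {A : Set (ℕ → X) | ∃ s : List X, A = cyl s}

/-- a precise probability tree: a probability mass function in every situation. -/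
def IsTree [Fintype X] (p : List X → X → ℝ) : Prop :=
  ∀ s : List X, (∀ x, 0 ≤ p s x) ∧ ∑ x, p s x = 1

/-- the `i`-th entry (0-based) of a list, i.e. the `(i+1)`-th state. -/
noncomputable def nthL [Nonempty X] (z : List X) (i : ℕ) : X :=
  z.getD i (Classical.arbitrary X)

/-- `P` is the family of conditional probability measures on `ℱ` determined by
the precise probability tree `p` via the product formula on cylinder events. -/
def CylProp [Fintype X] [Nonempty X] (p : List X → X → ℝ)
    (P : List X → @Measure (ℕ → X) (cylSA X)) : Prop :=
  ∀ s z : List X,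
    P s (cyl z) =
      if s.length < z.length ∧ z.take s.length = s then
        ∏ i ∈ Finset.Ico s.length z.length, ENNReal.ofReal (p (z.take i) (nthL z i))
      else if z.length ≤ s.length ∧ s.take z.length = z then 1 else 0

/-- the nonnegative part of an extended real, as an `ℝ≥0∞`. -/
noncomputable def toENN (a : EReal) : ℝ≥0∞ := if a = ⊤ then ⊤ else ENNReal.ofReal a.toReal

/-- `∫ f⁺ dP`. -/
noncomputable def lpos (P : @Measure (ℕ → X) (cylSA X)) (f : (ℕ → X) → EReal) : ℝ≥0∞ :=
  @MeasureTheory.lintegral _ (cylSA X) P (fun ω => toENN (f ω))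

/-- `∫ f⁻ dP`. -/
noncomputable def lneg (P : @Measure (ℕ → X) (cylSA X)) (f : (ℕ → X) → EReal) : ℝ≥0∞ :=
  @MeasureTheory.lintegral _ (cylSA X) P (fun ω => toENN (-(f ω)))

/-- the Lebesgue integral `∫ f dP = ∫ f⁺ dP − ∫ f⁻ dP`. -/
noncomputable def emeas (P : @Measure (ℕ → X) (cylSA X)) (f : (ℕ → X) → EReal) : EReal :=
  (lpos P f : EReal) - (lneg P f : EReal)

/-- `ℱ`-measurability of a global variable. -/
def FMeasurable (f : (ℕ → X) → EReal) : Prop := @Measurable _ _ (cylSA X) _ f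

/-- the Lebesgue integral `∫ f dP` exists. -/
def EMeasExists (P : @Measure (ℕ → X) (cylSA X)) (f : (ℕ → X) → EReal) : Prop :=
  FMeasurable f ∧ min (lpos P f) (lneg P f) < ⊤

/-- the upper integral `Ē¹`. -/
noncomputable def upInt1 (P : @Measure (ℕ → X) (cylSA X)) (f : (ℕ → X) → EReal) : EReal :=
  sInf {y : EReal | ∃ g : (ℕ → X) → EReal,
    FMeasurable g ∧ IsBddBelow g ∧ (∀ ω, f ω ≤ g ω) ∧ y = emeas P g}

/-- the upper integral `Ē²`. -/
noncomputable def upInt2 (P : @Measure (ℕ → X) (cylSA X)) (f : (ℕ → X) → EReal) : EReal :=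
  sInf {y : EReal | ∃ g : (ℕ → X) → EReal,
    EMeasExists P g ∧ (∀ ω, f ω ≤ g ω) ∧ y = emeas P g}

/-- the game-theoretic upper expectation with respect to a precise probability tree. -/
noncomputable def EVp [Fintype X] (p : List X → X → ℝ)
    (f : (ℕ → X) → EReal) (s : List X) : EReal :=
  sInf {y : EReal | ∃ M : List X → EReal, MBddBelow M ∧
    (∀ t : List X, ∑ x, ((p t x : ℝ) : EReal) * M (t ++ [x]) ≤ M t) ∧
    (∀ ω ∈ cyl s, f ω ≤ liminf (fun n => M (pref ω n)) atTop) ∧ y = M s}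

/-- the credal set of a coherent upper expectation. -/
def credal [Fintype X] (Q : (X → ℝ) → ℝ) : Set (X → ℝ) :=
  {q | (∀ x, 0 ≤ q x) ∧ (∑ x, q x = 1) ∧ ∀ f : X → ℝ, ∑ x, f x * q x ≤ Q f}

/-- a precise probability tree compatible with the imprecise probability tree `Q`. -/
def Compat [Fintype X] (Q : List X → (X → ℝ) → ℝ) (p : List X → X → ℝ) : Prop :=
  ∀ s : List X, p s ∈ credal (Q s)

/-- the global measure-theoretic upper expectation. -/
noncomputable def Emeas [Fintype X] (Q : List X → (X → ℝ) → ℝ)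
    (P : (List X → X → ℝ) → List X → @Measure (ℕ → X) (cylSA X))
    (f : (ℕ → X) → EReal) (s : List X) : EReal :=
  sSup {y : EReal | ∃ p : List X → X → ℝ, Compat Q p ∧ y = upInt1 (P p s) f}

/-!
Any global upper expectation satisfying P1–P2 is determined by the local model `Q_t` on gambles
that depend only on `t` and the next state. In particular `E'(g | t) = E(g | t)` for an
`n`-measurable gamble `g` once `|t| ≥ n`, and backward induction on `|t|` gives
`E'(g | t) ≤ E'(E'(g | X_{1:m+1}) | t) ≤ E'(E(g | X_{1:m+1}) | t) = E(E(g | X_{1:m+1}) | t) = E(g | t)`,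
(with `m = |t|`) by P3 for `E'`, monotonicity, the one-step identity and P3= for `E`.
For `f ∈ V̄_{b,lim}`, P6 supplies `n`-measurable gambles `fₙ → f` with `limsup E(fₙ | s) ≤ E(f | s)`,
and P5 for `E'` bounds `E'(f | s)` by `limsup E'(fₙ | s)`.
-/

lemma pref_eq_pref_iff {ω₁ ω₂ : ℕ → X} {n : ℕ} :
    pref ω₁ n = pref ω₂ n ↔ ∀ i : Fin n, ω₁ i = ω₂ i := by
  rw [pref, pref, List.ofFn_inj, funext_iff]

lemma pref_eq_pref_of_le {ω₁ ω₂ : ℕ → X} {n m : ℕ} (h : pref ω₁ m = pref ω₂ m) (hnm : n ≤ m) :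
    pref ω₁ n = pref ω₂ n :=
  pref_eq_pref_iff.2 fun i => pref_eq_pref_iff.1 h ⟨i, i.isLt.trans_le hnm⟩

lemma length_pref (ω : ℕ → X) (n : ℕ) : (pref ω n).length = n := List.length_ofFn

lemma pref_succ (ω : ℕ → X) (n : ℕ) : pref ω (n + 1) = pref ω n ++ [ω n] := by
  rw [pref, pref, List.ofFn_succ', List.concat_eq_append]
  rfl

lemma pref_length_succ_of_mem_cyl {ω : ℕ → X} {t : List X} (hω : ω ∈ cyl t) :
    pref ω (t.length + 1) = t ++ [ω t.length] := by
  rw [pref_succ, show pref ω t.length = t from hω]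

lemma pref_extPath [Nonempty X] (t : List X) : pref (extPath t) t.length = t := by
  have h : (fun i : Fin t.length => extPath t i) = t.get := by
    funext i
    simp [extPath, i.isLt]
  rw [pref, h, List.ofFn_get]

lemma NMeas.mono {n m : ℕ} {f : (ℕ → X) → EReal} (hf : NMeas n f) (hnm : n ≤ m) : NMeas m f :=
  fun _ _ h => hf _ _ (pref_eq_pref_of_le h hnm)

lemma IsGambleVal.coe_toReal {f : (ℕ → X) → EReal} (hf : IsGambleVal f) (ω : ℕ → X) :
    (((f ω).toReal : ℝ) : EReal) = f ω := by
  obtain ⟨a, b, hab⟩ := hf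
  exact EReal.coe_toReal (ne_top_of_le_ne_top (EReal.coe_ne_top b) (hab ω).2)
    (ne_bot_of_le_ne_bot (EReal.coe_ne_bot a) (hab ω).1)

lemma IsNGamble.isFinitaryGamble {n : ℕ} {f : (ℕ → X) → EReal} (hf : IsNGamble n f) :
    IsFinitaryGamble f :=
  ⟨⟨n, hf.1⟩, hf.2⟩

section Axioms

variable {Q : List X → (X → ℝ) → ℝ} {F : ((ℕ → X) → EReal) → List X → EReal}

lemma IsCoherent.apply_const [Fintype X] [Nonempty X] {q : (X → ℝ) → ℝ} (hq : IsCoherent q)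
    (c : ℝ) : q (fun _ => c) = c := by
  obtain ⟨hsup, hadd, hhom⟩ := hq
  have hzero : q (fun _ => 0) = 0 := by simpa using hhom 0 le_rfl (fun _ => 0)
  have hc : q (fun _ => c) ≤ c := by simpa using hsup (fun _ => c)
  have hnegc : q (fun _ => -c) ≤ -c := by simpa using hsup (fun _ => -c)
  have := hadd (fun _ => c) (fun _ => -c)
  simp only [add_neg_cancel, hzero] at this
  linarith

lemma P1.apply_const [Fintype X] [Nonempty X] (hQ : ∀ s, IsCoherent (Q s)) (hF1 : P1 Q F)
    (t : List X) (c : ℝ) : F (fun _ => (c : EReal)) t = c := by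
  simpa [(hQ t).apply_const c] using hF1 t (fun _ => c)

lemma P1.apply_bounds [Fintype X] [Nonempty X] (hQ : ∀ s, IsCoherent (Q s)) (hF1 : P1 Q F)
    (hF4 : P4 F) {g : (ℕ → X) → EReal} {a b : ℝ}
    (hab : ∀ ω, (a : EReal) ≤ g ω ∧ g ω ≤ b) (t : List X) :
    (a : EReal) ≤ F g t ∧ F g t ≤ b := by
  rw [← hF1.apply_const hQ t a, ← hF1.apply_const hQ t b]
  exact ⟨hF4 _ _ (fun ω => (hab ω).1) t, hF4 _ _ (fun ω => (hab ω).2) t⟩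

lemma P1.isNGamble_apply_pref [Fintype X] [Nonempty X] (hQ : ∀ s, IsCoherent (Q s))
    (hF1 : P1 Q F) (hF4 : P4 F) {g : (ℕ → X) → EReal} (hg : IsGambleVal g) (m : ℕ) :
    IsNGamble m (fun ω => F g (pref ω m)) := by
  obtain ⟨a, b, hab⟩ := hg
  exact ⟨fun _ _ h => by simp only [h], a, b, fun _ => hF1.apply_bounds hQ hF4 hab _⟩

lemma P2.apply_eq_of_isNGamble_succ [Nonempty X] (hF1 : P1 Q F) (hF2 : P2 F) {t : List X}
    {h : (ℕ → X) → EReal} (hh : IsNGamble (t.length + 1) h) :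
    F h t = Q t (fun x => (h (extPath (t ++ [x]))).toReal) := by
  obtain ⟨hmeas, a, b, hab⟩ := hh
  set φ : X → ℝ := fun x => (h (extPath (t ++ [x]))).toReal
  have hφ : ∀ x, (a : EReal) ≤ φ x ∧ (φ x : EReal) ≤ b := fun x => by
    rw [IsGambleVal.coe_toReal ⟨a, b, hab⟩]
    exact hab _
  have hlocal : IsFinitaryGamble (fun ω => (φ (ω t.length) : EReal)) :=
    ⟨⟨t.length + 1, fun ω₁ ω₂ hω => by
      simp only [pref_eq_pref_iff.1 hω ⟨t.length, t.length.lt_succ_self⟩]⟩, a, b, fun _ => hφ _⟩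
  have hcyl : ∀ ω ∈ cyl t, h ω = φ (ω t.length) := fun ω hω => by
    rw [IsGambleVal.coe_toReal ⟨a, b, hab⟩]
    refine hmeas _ _ ?_
    rw [pref_length_succ_of_mem_cyl hω]
    simpa using (pref_extPath (t ++ [ω t.length])).symm
  rw [hF2 h ⟨⟨_, hmeas⟩, a, b, hab⟩, ← hF1 t φ, hF2 _ hlocal]
  congr 1
  funext ω
  split_ifs with hω
  exacts [hcyl ω hω, rfl]

lemma P15.apply_eq_of_isNGamble_succ [Nonempty X] {E E' : ((ℕ → X) → EReal) → List X → EReal}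
    (hE : P15 Q E) (hE' : P15 Q E') {t : List X}
    {h : (ℕ → X) → EReal} (hh : IsNGamble (t.length + 1) h) : E' h t = E h t := by
  rw [hE'.2.1.apply_eq_of_isNGamble_succ hE'.1 hh, hE.2.1.apply_eq_of_isNGamble_succ hE.1 hh]

end Axioms

section Comparison

variable [Fintype X] [Nonempty X] {Q : List X → (X → ℝ) → ℝ}
  {E E' : ((ℕ → X) → EReal) → List X → EReal}

lemma P15.le_of_isNGamble (hQ : ∀ s, IsCoherent (Q s)) (hE : P15 Q E) (hEiter : P3eq E)
    (hE' : P15 Q E') {n : ℕ} {g : (ℕ → X) → EReal} (hg : IsNGamble n g) (t : List X) :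
    E' g t ≤ E g t := by
  obtain ⟨k, hk⟩ : ∃ k, n ≤ t.length + k := ⟨n, Nat.le_add_left n _⟩
  induction k generalizing t with
  | zero =>
    exact (hE.apply_eq_of_isNGamble_succ hE' ⟨hg.1.mono (by omega), hg.2⟩).le
  | succ k ih =>
    have hE'super := hE'.2.2.1 g hg.isFinitaryGamble t.length (extPath t)
    have hEiter_t := hEiter g hg.isFinitaryGamble t.length (extPath t)
    rw [pref_extPath] at hE'super hEiter_t
    have hnext : IsNGamble (t.length + 1) (fun ω => E g (pref ω (t.length + 1))) :=
      hE.1.isNGamble_apply_pref hQ hE.2.2.2.1 hg.2 (t.length + 1)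
    calc E' g t
        ≤ E' (fun ω => E' g (pref ω (t.length + 1))) t := hE'super
      _ ≤ E' (fun ω => E g (pref ω (t.length + 1))) t :=
          hE'.2.2.2.1 _ _ (fun ω => ih _ (by rw [length_pref]; omega)) t
      _ = E (fun ω => E g (pref ω (t.length + 1))) t := hE.apply_eq_of_isNGamble_succ hE' hnext
      _ = E g t := hEiter_t.symm

end Comparison

theorem stmt2 {X : Type*} [Fintype X] [Nonempty X]
    (Q : List X → (X → ℝ) → ℝ) (hQ : ∀ s, IsCoherent (Q s))
    (E E' : ((ℕ → X) → EReal) → List X → EReal)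
    (hE : P15 Q E) (hEiter : P3eq E) (hE6 : P6 E)
    (hE' : P15 Q E')
    (f : (ℕ → X) → EReal) (hf : Vblim f) (s : List X) :
    E' f s ≤ E f s := by
  obtain ⟨fs, hfs, hbdd, hlim, hlimsup⟩ := hE6 f hf s
  calc E' f s
      ≤ limsup (fun n => E' (fs n) s) atTop :=
        hE'.2.2.2.2 s f fs (fun n => (hfs n).isFinitaryGamble) hbdd hlim
    _ ≤ limsup (fun n => E (fs n) s) atTop :=
        limsup_le_limsup (.of_forall fun n => hE.le_of_isNGamble hQ hEiter hE' (hfs n) s)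
    _ ≤ E f s := hlimsup

end UEP
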